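/- arXiv:1809.09908 — 2 statements merged into one kernel-verified Lean document; each statement's English description precedes it below -/
import Mathlib

section
/- Let k ≥ 4 be an integer and let P_k be the path on vertex set [k] with edges {i, i+1} for 0 ≤ i ≤ k−2. Then the packing chromatic number of the generalized Sierpiński graph of P_k of dimension 2 satisfies χρ(S^2_{P_k}) ≥ 4. -/
open SimpleGraph

/-- The generalized Sierpiński graph `S^n_G` of a graph `G` on vertex set `[k]`:
vertices are words of length `n` over `[k]`, and distinct words `u`, `v` are adjacent
iff there is an index `i` such that `u j = v j` for `j < i`, `u i v i` is an edge of `G`,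
and `u j = v i`, `v j = u i` for all `j > i`. -/
def sierpinskiGraph {k : ℕ} (G : SimpleGraph (Fin k)) (n : ℕ) :
    SimpleGraph (Fin n → Fin k) where
  Adj u v := ∃ i : Fin n,
      (∀ j, j < i → u j = v j) ∧ G.Adj (u i) (v i) ∧
      (∀ j, i < j → u j = v i ∧ v j = u i)
  symm := by
    constructor
    rintro u v ⟨i, h1, h2, h3⟩
    exact ⟨i, fun j hj => (h1 j hj).symm, h2.symm,
      fun j hj => ⟨(h3 j hj).2, (h3 j hj).1⟩⟩
  loopless := by
    constructor
    rintro u ⟨i, _, h2, _⟩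
    exact G.loopless.irrefl _ h2

/-- `f` is a packing `c`-coloring of `H`: colors lie in `{1, …, c}` and any two distinct
vertices of the same color `t` are at (extended) distance greater than `t`. -/
def IsPackingColoring {V : Type*} (H : SimpleGraph V) (f : V → ℕ) (c : ℕ) : Prop :=
  (∀ v, 1 ≤ f v ∧ f v ≤ c) ∧
    ∀ u v, u ≠ v → f u = f v → (f u : ℕ∞) < H.edist u v

/-- The packing chromatic number of `H`: the least `c` admitting a packing `c`-coloring. -/
noncomputable def packingChromaticNumber {V : Type*} (H : SimpleGraph V) : ℕ :=
  sInf {c | ∃ f : V → ℕ, IsPackingColoring H f c}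

/-! In `S²_{P_k}` the words `1j` and `2j` form two copies of the path `0 1 2 3`, joined by the
edge `12 — 21`, both of whose ends have degree `3`. In a packing 3-coloring a vertex of degree `3`
cannot take color `1`, so `12` and `21` take the colors `2` and `3`. This forces color `1` on `11`
and `22`, and then whichever of `10`, `23` lies at distance `3` from the end colored `3` has no
color left. -/

theorem SimpleGraph.edist_le_two_of_adj {V : Type*} {H : SimpleGraph V} {u v w : V}
    (h₁ : H.Adj u v) (h₂ : H.Adj v w) : H.edist u w ≤ 2 :=
  (Walk.cons h₁ (Walk.cons h₂ .nil)).edist_le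

theorem SimpleGraph.edist_le_three_of_adj {V : Type*} {H : SimpleGraph V} {u v w x : V}
    (h₁ : H.Adj u v) (h₂ : H.Adj v w) (h₃ : H.Adj w x) : H.edist u x ≤ 3 :=
  (Walk.cons h₁ (Walk.cons h₂ (Walk.cons h₃ .nil))).edist_le

namespace IsPackingColoring

variable {V : Type*} {H : SimpleGraph V} {f : V → ℕ} {c : ℕ}

theorem lt_of_edist_le (hf : IsPackingColoring H f c) {u v : V} (hne : u ≠ v) (t : ℕ)
    (hd : H.edist u v ≤ t) (heq : f u = f v) : f u < t := by
  exact_mod_cast (hf.2 u v hne heq).trans_le hd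

theorem ne_of_adj (hf : IsPackingColoring H f c) {u v : V} (h : H.Adj u v) : f u ≠ f v :=
  fun heq => (hf.lt_of_edist_le h.ne 1 (edist_eq_one_iff_adj.mpr h).le heq).not_ge (hf.1 u).1

/-- The three neighbours of `v` are pairwise at distance `≤ 2`, so they would need three distinct
colors from `{2, 3}`. -/
theorem ne_one_of_three_adj (hf : IsPackingColoring H f c) (hc : c ≤ 3) {v u₁ u₂ u₃ : V}
    (h₁ : H.Adj v u₁) (h₂ : H.Adj v u₂) (h₃ : H.Adj v u₃)
    (h₁₂ : u₁ ≠ u₂) (h₁₃ : u₁ ≠ u₃) (h₂₃ : u₂ ≠ u₃) : f v ≠ 1 := by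
  have := hf.lt_of_edist_le h₁₂ 2 (edist_le_two_of_adj h₁.symm h₂)
  have := hf.lt_of_edist_le h₁₃ 2 (edist_le_two_of_adj h₁.symm h₃)
  have := hf.lt_of_edist_le h₂₃ 2 (edist_le_two_of_adj h₂.symm h₃)
  have := hf.ne_of_adj h₁
  have := hf.ne_of_adj h₂
  have := hf.ne_of_adj h₃
  have := hf.1 u₁; have := hf.1 u₂; have := hf.1 u₃
  omega

/-- Once the edge `pq` carries the colors `2` and `3`, a vertex adjacent to `p` is too close to
both ends for either color. -/
theorem eq_one_of_adj_of_adj (hf : IsPackingColoring H f c) (hc : c ≤ 3) {w p q : V}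
    (hwp : H.Adj w p) (hpq : H.Adj p q) (hwq : w ≠ q) (hp : f p ≠ 1) (hq : f q ≠ 1) :
    f w = 1 := by
  have := hf.lt_of_edist_le hwq 2 (edist_le_two_of_adj hwp hpq)
  have := hf.ne_of_adj hwp
  have := hf.ne_of_adj hpq
  have := hf.1 w; have := hf.1 p; have := hf.1 q
  omega

/-- Along a path `w₀ w₁ p q` with `f w₁ = 1` and `{f p, f q} = {2, 3}`, the only color left
for `w₀` is `f q`, which is allowed at distance `3` only if it is `2`. -/
theorem eq_two_of_path (hf : IsPackingColoring H f c) (hc : c ≤ 3) {w₀ w₁ p q : V}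
    (h₀₁ : H.Adj w₀ w₁) (h₁p : H.Adj w₁ p) (hpq : H.Adj p q) (h₀p : w₀ ≠ p) (h₀q : w₀ ≠ q)
    (h₁ : f w₁ = 1) (hp : f p ≠ 1) (hq : f q ≠ 1) : f q = 2 := by
  have := hf.ne_of_adj h₀₁
  have := hf.lt_of_edist_le h₀p 2 (edist_le_two_of_adj h₀₁ h₁p)
  have := hf.lt_of_edist_le h₀q 3 (edist_le_three_of_adj h₀₁ h₁p hpq)
  have := hf.ne_of_adj hpq
  have := hf.1 w₀; have := hf.1 p; have := hf.1 q
  omega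

end IsPackingColoring

theorem exists_isPackingColoring_card {V : Type*} [Fintype V] (H : SimpleGraph V) :
    ∃ f : V → ℕ, IsPackingColoring H f (Fintype.card V) := by
  refine ⟨fun v => Fintype.equivFin V v + 1,
    fun v => ⟨Nat.le_add_left 1 _, (Fintype.equivFin V v).isLt⟩,
    fun u v hne heq => absurd ((Fintype.equivFin V).injective (Fin.ext ?_)) hne⟩
  simpa using heq

theorem le_packingChromaticNumber {V : Type*} [Fintype V] {H : SimpleGraph V} {n : ℕ}
    (h : ∀ f c, IsPackingColoring H f c → n ≤ c) : n ≤ packingChromaticNumber H :=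
  le_csInf ⟨_, exists_isPackingColoring_card H⟩ fun c ⟨f, hf⟩ => h f c hf

namespace sierpinskiGraph

variable {k : ℕ} {G : SimpleGraph (Fin k)}

theorem two_adj_of_adj_snd (a : Fin k) {b b' : Fin k} (h : G.Adj b b') :
    (sierpinskiGraph G 2).Adj ![a, b] ![a, b'] := by
  refine ⟨1, fun j hj => ?_, h, fun j hj => absurd hj (by fin_cases j <;> decide)⟩
  fin_cases j
  · rfl
  · exact absurd hj (by decide)

theorem two_adj_swap {a b : Fin k} (h : G.Adj a b) :
    (sierpinskiGraph G 2).Adj ![a, b] ![b, a] := by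
  refine ⟨0, fun j hj => absurd hj (by fin_cases j <;> decide), h, fun j hj => ?_⟩
  fin_cases j
  · exact absurd hj (by decide)
  · exact ⟨rfl, rfl⟩

theorem four_le_of_isPackingColoring_two {a₀ a₁ a₂ a₃ : Fin k}
    (h₀₁ : G.Adj a₀ a₁) (h₁₂ : G.Adj a₁ a₂) (h₂₃ : G.Adj a₂ a₃) (h₀₂ : a₀ ≠ a₂) (h₁₃ : a₁ ≠ a₃)
    {f : (Fin 2 → Fin k) → ℕ} {c : ℕ} (hf : IsPackingColoring (sierpinskiGraph G 2) f c) :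
    4 ≤ c := by
  by_contra! hc
  replace hc := Nat.le_of_lt_succ hc
  have fst_ne {a a' b b' : Fin k} (h : a ≠ a') : ![a, b] ≠ ![a', b'] := fun e => h (congrFun e 0)
  have snd_ne {a b b' : Fin k} (h : b ≠ b') : ![a, b] ≠ ![a, b'] := fun e => h (congrFun e 1)
  have x₀₁ := two_adj_of_adj_snd a₁ h₀₁
  have x₁₂ := two_adj_of_adj_snd a₁ h₁₂
  have y₁₂ := two_adj_of_adj_snd a₂ h₁₂
  have y₂₃ := two_adj_of_adj_snd a₂ h₂₃
  have bridge := two_adj_swap h₁₂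
  have hx : f ![a₁, a₂] ≠ 1 := hf.ne_one_of_three_adj hc x₁₂.symm (two_adj_of_adj_snd a₁ h₂₃)
    bridge (snd_ne h₁₃) (fst_ne h₁₂.ne) (fst_ne h₁₂.ne)
  have hy : f ![a₂, a₁] ≠ 1 := hf.ne_one_of_three_adj hc (two_adj_of_adj_snd a₂ h₀₁).symm y₁₂
    bridge.symm (snd_ne h₀₂) (fst_ne h₁₂.ne.symm) (fst_ne h₁₂.ne.symm)
  have hx₁ := hf.eq_one_of_adj_of_adj hc x₁₂ bridge (fst_ne h₁₂.ne) hx hy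
  have hy₂ := hf.eq_one_of_adj_of_adj hc y₁₂.symm bridge.symm (fst_ne h₁₂.ne.symm) hy hx
  have hy_two := hf.eq_two_of_path hc x₀₁ x₁₂ bridge (snd_ne h₀₂) (fst_ne h₁₂.ne) hx₁ hx hy
  have hx_two := hf.eq_two_of_path hc y₂₃.symm y₁₂.symm bridge.symm (snd_ne h₁₃.symm)
    (fst_ne h₁₂.ne.symm) hy₂ hy hx
  exact hf.ne_of_adj bridge (hx_two.trans hy_two.symm)

end sierpinskiGraph

theorem stmt3 (k : ℕ) (hk : 4 ≤ k) :
    4 ≤ packingChromaticNumber (sierpinskiGraph (SimpleGraph.pathGraph k) 2) := by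
  have hadj {i j : Fin k} (h : i.val + 1 = j.val) : (pathGraph k).Adj i j :=
    pathGraph_adj.mpr (Or.inl h)
  exact le_packingChromaticNumber fun f c hf =>
    sierpinskiGraph.four_le_of_isPackingColoring_two (a₀ := ⟨0, by omega⟩) (a₁ := ⟨1, by omega⟩)
      (a₂ := ⟨2, by omega⟩) (a₃ := ⟨3, by omega⟩) (hadj rfl) (hadj rfl) (hadj rfl) (by simp)
      (by simp) hf
end

section
/- Let G be a simple graph with vertex set [k] and let n ≥ 2. For every j ∈ [k] and all vertices u, v of the generalized Sierpiński graph S^{n−1}_G, the shortest-path distance between the corresponding vertices ju and jv in S^n_G equals the shortest-path distance between u and v in S^{n−1}_G: d_{S^{n−1}_G}(u, v) = d_{S^n_G}(ju, jv). -/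
/-!
Attach to a word `w = a w'` of `S^{m+1}_G` the unordered pair of vertices `{w', a^m}` of
`S^m_G`. Along an edge inside a block only `w'` moves, along an edge of `S^m_G`;
across a crossing edge `a b^m ~ b a^m` the pair does not change at all. Hence the matching
distance between the pairs of two words is at most their distance in `S^{m+1}_G`. For the
words `ju` and `jv` that matching distance is
`min (d(u, v) + d(j^m, j^m)) (d(u, j^m) + d(j^m, v)) = d(u, v)`.
-/

open SimpleGraph

namespace SimpleGraph

variable {V W : Type*}

theorem Hom.edist_le {H : SimpleGraph V} {H' : SimpleGraph W} (f : H →g H') (u v : V) :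
    H'.edist (f u) (f v) ≤ H.edist u v :=
  le_iInf fun p => (H'.edist_le (p.map f)).trans_eq (by rw [Walk.length_map])

variable (H : SimpleGraph V)

/-- The distance between the unordered pairs `{a, b}` and `{c, d}` under the better of the
two matchings. -/
noncomputable def pairEdist (a b c d : V) : ℕ∞ :=
  min (H.edist a c + H.edist b d) (H.edist a d + H.edist b c)

variable {H}

theorem pairEdist_swap_left (a b c d : V) : H.pairEdist a b c d = H.pairEdist b a c d := by
  rw [pairEdist, pairEdist, min_comm, add_comm (H.edist a c), add_comm (H.edist a d)]

theorem pairEdist_le_of_adj_left {a a' : V} (h : H.Adj a a') (b c d : V) :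
    H.pairEdist a b c d ≤ H.pairEdist a' b c d + 1 := by
  have step (x : V) : H.edist a x ≤ H.edist a' x + 1 :=
    calc H.edist a x ≤ H.edist a a' + H.edist a' x := H.edist_triangle
      _ = H.edist a' x + 1 := by rw [edist_eq_one_iff_adj.mpr h, add_comm]
  calc H.pairEdist a b c d
      ≤ min (H.edist a' c + 1 + H.edist b d) (H.edist a' d + 1 + H.edist b c) :=
        min_le_min (add_le_add_left (step c) _) (add_le_add_left (step d) _)
    _ = H.pairEdist a' b c d + 1 := by
        rw [pairEdist, ← min_add_add_right, add_right_comm, add_right_comm (H.edist a' d)]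

theorem edist_le_pairEdist (a b c : V) : H.edist a c ≤ H.pairEdist a b c b :=
  le_min (le_add_right le_rfl) H.edist_triangle

end SimpleGraph

namespace sierpinskiGraph

variable {k : ℕ} {G : SimpleGraph (Fin k)} {m : ℕ}

theorem adj_succ_cases {u v : Fin (m + 1) → Fin k} (h : (sierpinskiGraph G (m + 1)).Adj u v) :
    (u 0 = v 0 ∧ (sierpinskiGraph G m).Adj (Fin.tail u) (Fin.tail v)) ∨
      (Fin.tail u = (fun _ => v 0) ∧ Fin.tail v = (fun _ => u 0)) := by
  obtain ⟨i, hlt, hG, hgt⟩ := h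
  cases i using Fin.cases with
  | zero =>
    exact Or.inr ⟨funext fun t => (hgt t.succ t.succ_pos).1,
      funext fun t => (hgt t.succ t.succ_pos).2⟩
  | succ i =>
    exact Or.inl ⟨hlt 0 i.succ_pos, i, fun t ht => hlt t.succ (Fin.succ_lt_succ_iff.mpr ht), hG,
      fun t ht => hgt t.succ (Fin.succ_lt_succ_iff.mpr ht)⟩

theorem cons_adj_cons (j : Fin k) {u v : Fin m → Fin k} (h : (sierpinskiGraph G m).Adj u v) :
    (sierpinskiGraph G (m + 1)).Adj (Fin.cons j u) (Fin.cons j v) := by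
  obtain ⟨i, hlt, hG, hgt⟩ := h
  refine ⟨i.succ, fun t ht => ?_, by simpa using hG, fun t ht => ?_⟩
  · cases t using Fin.cases with
    | zero => rfl
    | succ t => simpa using hlt t (Fin.succ_lt_succ_iff.mp ht)
  · cases t using Fin.cases with
    | zero => exact absurd ht (Fin.succ_pos i).not_gt
    | succ t => simpa using hgt t (Fin.succ_lt_succ_iff.mp ht)

variable (G m) in
def consHom (j : Fin k) : sierpinskiGraph G m →g sierpinskiGraph G (m + 1) where
  toFun w := Fin.cons j w
  map_rel' := cons_adj_cons j

theorem pairEdist_tail_le_length {u v : Fin (m + 1) → Fin k}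
    (p : (sierpinskiGraph G (m + 1)).Walk u v) :
    (sierpinskiGraph G m).pairEdist (Fin.tail u) (fun _ => u 0) (Fin.tail v) (fun _ => v 0) ≤
      p.length := by
  induction p with
  | nil => simp [pairEdist]
  | @cons a b c h p ih =>
    rw [Walk.length_cons, Nat.cast_succ]
    rcases adj_succ_cases h with ⟨h0, htail⟩ | ⟨hta, htb⟩
    · rw [h0]
      exact (pairEdist_le_of_adj_left htail _ _ _).trans (add_le_add_left ih 1)
    · rw [hta, pairEdist_swap_left, ← htb]
      exact ih.trans le_self_add

end sierpinskiGraph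

theorem stmt18_general (k : ℕ) (G : SimpleGraph (Fin k)) (m : ℕ) (j : Fin k)
    (u v : Fin m → Fin k) :
    (sierpinskiGraph G m).edist u v =
      (sierpinskiGraph G (m + 1)).edist (Fin.cons j u) (Fin.cons j v) := by
  refine le_antisymm (le_iInf fun p => ?_) ?_
  · have h := sierpinskiGraph.pairEdist_tail_le_length p
    simp only [Fin.tail_cons, Fin.cons_zero] at h
    exact (edist_le_pairEdist u _ v).trans h
  · exact (sierpinskiGraph.consHom G m j).edist_le u v

/-- Statement for `n = m + 1 ≥ 2`: prepending a fixed letter `j` preserves distances,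
i.e. `d_{S^{n-1}_G}(u, v) = d_{S^n_G}(ju, jv)`. -/
theorem stmt18 (k : ℕ) (G : SimpleGraph (Fin k)) (m : ℕ) (hm : 1 ≤ m) (j : Fin k)
    (u v : Fin m → Fin k) :
    (sierpinskiGraph G m).edist u v =
      (sierpinskiGraph G (m + 1)).edist (Fin.cons j u) (Fin.cons j v) :=
  stmt18_general k G m j u v
end
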